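/- Let G be a finitely generated group with an orientation preserving action on the circle by homeomorphisms and let μ be a G-invariant Borel probability measure. If H_1(G,ℤ) = 0, i.e., G is equal to its commutator subgroup (G is perfect), then G acts with a global fixed point: there exists a point of the circle fixed by every element of G. -/

import Mathlib

noncomputable section

open MeasureTheory

/-- The circle `S¹ = ℝ/ℤ`. -/
abbrev 𝕊 : Type := AddCircle (1 : ℝ)

/-- `F : ℝ → ℝ` is a lift of the circle bijection `f` witnessing that `f` is an
orientation preserving homeomorphism of the circle: `F` is a strictly increasing
homeomorphism of `ℝ` (equivalently, continuous and strictly increasing) satisfying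
`F (x + 1) = F x + 1`, and projecting to `f`. -/
def IsOPLift (f : Equiv.Perm 𝕊) (F : ℝ → ℝ) : Prop :=
  Continuous F ∧ StrictMono F ∧ (∀ x : ℝ, F (x + 1) = F x + 1) ∧
    ∀ x : ℝ, f (x : 𝕊) = (F x : 𝕊)

/-- `f` is an orientation preserving homeomorphism of the circle. -/
def IsOPHomeo (f : Equiv.Perm 𝕊) : Prop := ∃ F : ℝ → ℝ, IsOPLift f F

/-- `F` is a lift witnessing that `f` is an orientation preserving `C¹` diffeomorphism
of the circle: an orientation preserving lift which is `C¹` with nowhere vanishing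
derivative. -/
def IsC1Lift (f : Equiv.Perm 𝕊) (F : ℝ → ℝ) : Prop :=
  IsOPLift f F ∧ ContDiff ℝ 1 F ∧ ∀ x : ℝ, deriv F x ≠ 0

/-- `f` is an orientation preserving `C¹` diffeomorphism of the circle, i.e. an element
of `Diff¹₊(S¹)`. -/
def IsC1Diffeo (f : Equiv.Perm 𝕊) : Prop := ∃ F : ℝ → ℝ, IsC1Lift f F

/-!
For a lift `F` of `f` and an `f`-invariant measure `μ`, the mean displacement
`∫ (F x - x) dμ` is additive under composition, so mod `ℤ` it is a homomorphism `G → ℝ/ℤ`,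
trivial because `G` is perfect. Hence every `g` has a lift with mean displacement zero, and such
a lift has a fixed point `a`. If a point `x ∈ [a, a + 1)` of the support of `μ` were moved, say
`x < F x`, it would lie inside `[F⁻¹ x, F x)`, a union of two arcs `[y, F y)` which are wandering
between `a` and `a + 1`, hence null by Poincaré recurrence.
-/

open Function Set

theorem Continuous.exists_eq_zero_of_integral_eq_zero {X : Type*} [TopologicalSpace X]
    [PreconnectedSpace X] [MeasurableSpace X] {μ : Measure X} [NeZero μ] {φ : X → ℝ}
    (hφ : Continuous φ) (hφi : Integrable φ μ) (h : ∫ x, φ x ∂μ = 0) : ∃ x, φ x = 0 := by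
  have integral_pos (ψ : X → ℝ) (hψi : Integrable ψ μ) (hψ : ∀ x, 0 < ψ x) :
      0 < ∫ x, ψ x ∂μ := by
    rw [integral_pos_iff_support_of_nonneg (fun x => (hψ x).le) hψi,
      support_eq_univ (fun x => (hψ x).ne'), Measure.measure_univ_pos]
    exact NeZero.ne μ
  by_contra! hne
  by_cases hpos : ∀ x, 0 < φ x
  · exact (integral_pos φ hφi hpos).ne' h
  obtain ⟨x₀, hx₀⟩ := not_forall.mp hpos
  have hneg : ∀ x, 0 < -φ x := fun x => by
    by_contra! hx
    obtain ⟨y, hy⟩ := intermediate_value_univ x₀ x hφ ⟨not_lt.mp hx₀, neg_nonpos.mp hx⟩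
    exact hne y hy
  have := integral_pos (fun x => -φ x) hφi.neg hneg
  rw [integral_neg, h, neg_zero] at this
  exact this.false

theorem measurableSet_image_coe_Ico (a b : ℝ) :
    MeasurableSet (((↑) : ℝ → 𝕊) '' Ico a b) := by
  rcases lt_or_ge a b with hab | hba
  · rw [← Ioo_insert_left hab, image_insert_eq]
    exact ((QuotientAddGroup.isOpenMap_coe _ isOpen_Ioo).measurableSet).insert _
  · simp [Ico_eq_empty_of_le hba]

namespace IsOPLift

variable {f g : Equiv.Perm 𝕊} {F G : ℝ → ℝ} {μ : Measure 𝕊}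

theorem continuous (hF : IsOPLift f F) : Continuous F := hF.1

theorem strictMono (hF : IsOPLift f F) : StrictMono F := hF.2.1

theorem map_add_one (hF : IsOPLift f F) (x : ℝ) : F (x + 1) = F x + 1 := hF.2.2.1 x

theorem apply_coe (hF : IsOPLift f F) (x : ℝ) : f x = F x := hF.2.2.2 x

theorem semiconj (hF : IsOPLift f F) : Semiconj ((↑) : ℝ → 𝕊) F f :=
  fun x => (hF.apply_coe x).symm

theorem continuous_perm (hF : IsOPLift f F) : Continuous f := by
  rw [(QuotientAddGroup.isQuotientMap_mk _).continuous_iff, ← hF.semiconj.comp_eq]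
  exact continuous_quotient_mk'.comp hF.continuous

def toCircleDeg1Lift (hF : IsOPLift f F) : CircleDeg1Lift :=
  ⟨⟨F, hF.strictMono.monotone⟩, hF.map_add_one⟩

theorem surjective (hF : IsOPLift f F) : Surjective F :=
  hF.toCircleDeg1Lift.continuous_iff_surjective.mp hF.continuous

theorem mul (hF : IsOPLift f F) (hG : IsOPLift g G) : IsOPLift (f * g) (F ∘ G) :=
  ⟨hF.continuous.comp hG.continuous, hF.strictMono.comp hG.strictMono,
    fun x => by simp only [comp_apply, hG.map_add_one, hF.map_add_one],
    fun x => by simp only [Equiv.Perm.mul_apply, comp_apply, hG.apply_coe, hF.apply_coe]⟩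

theorem add_int (hF : IsOPLift f F) (n : ℤ) : IsOPLift f (fun x => F x + n) :=
  ⟨hF.continuous.add continuous_const, hF.strictMono.add_const _,
    fun x => by simp only [hF.map_add_one]; ring,
    fun x => by simp [hF.apply_coe]⟩

theorem exists_symm (hF : IsOPLift f F) : ∃ F', IsOPLift f.symm F' ∧ LeftInverse F' F := by
  let e : ℝ ≃o ℝ := hF.strictMono.orderIsoOfSurjective F hF.surjective
  have he : ∀ x, F (e.symm x) = x := e.apply_symm_apply
  refine ⟨e.symm, ⟨e.symm.continuous, e.symm.strictMono, fun x => ?_, fun x => ?_⟩,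
    e.symm_apply_apply⟩
  · exact hF.strictMono.injective (by rw [he, hF.map_add_one, he])
  · rw [Equiv.symm_apply_eq, hF.apply_coe, he]

theorem exists_int_eq_add (hF : IsOPLift f F) (hF' : IsOPLift f G) :
    ∃ n : ℤ, ∀ x, G x = F x + n := by
  have hmaps : MapsTo (fun x => G x - F x) univ (AddSubgroup.zmultiples (1 : ℝ)) :=
    fun x _ => (QuotientAddGroup.eq_zero_iff _).mp (by
      rw [QuotientAddGroup.mk_sub, ← hF.apply_coe, ← hF'.apply_coe, sub_self])
  obtain ⟨n, hn⟩ := AddSubgroup.mem_zmultiples_iff.mp (hmaps (mem_univ 0))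
  refine ⟨n, fun x => ?_⟩
  have hconst := isPreconnected_univ.constant_of_mapsTo
    (isDiscrete_iff_discreteTopology.mpr
      (inferInstanceAs (DiscreteTopology (AddSubgroup.zmultiples (1 : ℝ)))))
    (hF'.continuous.sub hF.continuous).continuousOn hmaps (mem_univ x) (mem_univ 0)
  simp only [zsmul_one, Pi.sub_apply] at hn hconst
  linarith

theorem periodic_sub (hF : IsOPLift f F) : Periodic (fun x => F x - x) 1 :=
  fun x => by simp only [hF.map_add_one]; ring

def displacement (hF : IsOPLift f F) : 𝕊 → ℝ := hF.periodic_sub.lift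

@[simp]
theorem displacement_coe (hF : IsOPLift f F) (x : ℝ) : hF.displacement x = F x - x :=
  hF.periodic_sub.lift_coe x

theorem continuous_displacement (hF : IsOPLift f F) : Continuous hF.displacement := by
  rw [(QuotientAddGroup.isQuotientMap_mk _).continuous_iff]
  exact hF.continuous.sub continuous_id

theorem integrable_displacement (hF : IsOPLift f F) (μ : Measure 𝕊) [IsFiniteMeasure μ] :
    Integrable hF.displacement μ :=
  hF.continuous_displacement.integrable_of_hasCompactSupport (.of_compactSpace _)

theorem displacement_mul (hF : IsOPLift f F) (hG : IsOPLift g G) (z : 𝕊) :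
    (hF.mul hG).displacement z = hF.displacement (g z) + hG.displacement z := by
  induction z using QuotientAddGroup.induction_on with
  | H x => simp only [displacement_coe, comp_apply, hG.apply_coe]; ring

theorem displacement_add_int (hF : IsOPLift f F) (n : ℤ) (z : 𝕊) :
    (hF.add_int n).displacement z = hF.displacement z + n := by
  induction z using QuotientAddGroup.induction_on with
  | H x => simp only [displacement_coe]; ring

theorem integral_displacement_mul [IsFiniteMeasure μ] (hF : IsOPLift f F) (hG : IsOPLift g G)
    (hg : MeasurePreserving g μ μ) :
    ∫ z, (hF.mul hG).displacement z ∂μ =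
      ∫ z, hF.displacement z ∂μ + ∫ z, hG.displacement z ∂μ := by
  calc ∫ z, (hF.mul hG).displacement z ∂μ
      = ∫ z, (hF.displacement (g z) + hG.displacement z) ∂μ :=
        integral_congr_ae (.of_forall (displacement_mul hF hG))
    _ = ∫ z, hF.displacement (g z) ∂μ + ∫ z, hG.displacement z ∂μ :=
        integral_add (hg.integrable_comp_of_integrable (hF.integrable_displacement μ))
          (hG.integrable_displacement μ)
    _ = ∫ z, hF.displacement z ∂μ + ∫ z, hG.displacement z ∂μ := by
        rw [← integral_map hg.aemeasurable hF.continuous_displacement.aestronglyMeasurable,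
          hg.map_eq]

theorem integral_displacement_add_int [IsProbabilityMeasure μ] (hF : IsOPLift f F) (n : ℤ) :
    ∫ z, (hF.add_int n).displacement z ∂μ = ∫ z, hF.displacement z ∂μ + n := by
  rw [funext (displacement_add_int hF n),
    integral_add (hF.integrable_displacement μ) (integrable_const _), integral_const]
  simp

theorem exists_integral_displacement_eq_add_int [IsProbabilityMeasure μ] (hF : IsOPLift f F)
    (hF' : IsOPLift f G) :
    ∃ n : ℤ, ∫ z, hF'.displacement z ∂μ = ∫ z, hF.displacement z ∂μ + n := by
  obtain ⟨n, hn⟩ := hF.exists_int_eq_add hF'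
  obtain rfl : G = fun x => F x + n := funext hn
  exact ⟨n, hF.integral_displacement_add_int n⟩

theorem exists_fixedPoint_of_integral_displacement_eq_zero [IsProbabilityMeasure μ]
    (hF : IsOPLift f F) (h : ∫ z, hF.displacement z ∂μ = 0) : ∃ a, F a = a := by
  obtain ⟨z, hz⟩ :=
    hF.continuous_displacement.exists_eq_zero_of_integral_eq_zero (hF.integrable_displacement μ) h
  induction z using QuotientAddGroup.induction_on with
  | H x => exact ⟨x, sub_eq_zero.mp (by simpa using hz)⟩

/-- The arc is wandering, so Poincaré recurrence forces it to be null. -/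
theorem measure_image_coe_Ico_eq_zero [IsFiniteMeasure μ] (hF : IsOPLift f F)
    (hμ : MeasurePreserving f μ μ) {a y : ℝ} (ha : F a = a) (hay : a ≤ y) (hya : y < a + 1)
    (hy : y < F y) : μ (((↑) : ℝ → 𝕊) '' Ico y (F y)) = 0 := by
  by_contra hpos
  obtain ⟨_, ⟨t, ht, rfl⟩, m, hm, s, hs, hst⟩ :=
    hμ.exists_mem_iterate_mem (measurableSet_image_coe_Ico _ _).nullMeasurableSet hpos
  rw [← (hF.semiconj.iterate_right m) t] at hst
  have ha1 : F (a + 1) = a + 1 := by rw [hF.map_add_one, ha]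
  have hFy : F y ≤ F^[m] y := by
    simpa using hF.strictMono.monotone.monotone_iterate_of_le_map hy.le
      (Nat.one_le_iff_ne_zero.mpr hm)
  have hyt : F^[m] y ≤ F^[m] t := (hF.strictMono.iterate m).monotone ht.1
  have hta : F^[m] t < a + 1 := by
    rw [← iterate_fixed ha1 m]
    exact hF.strictMono.iterate m (ht.2.trans (by rw [← ha1]; exact hF.strictMono hya))
  have := (AddCircle.coe_eq_coe_iff_of_mem_Ico (p := 1) (a := a)
    ⟨hay.trans hs.1, by linarith [hs.2]⟩ ⟨by linarith [ht.1], hta⟩).mp hst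
  linarith [hs.2]

theorem coe_notMem_support_of_lt [IsFiniteMeasure μ] (hF : IsOPLift f F)
    (hμ : MeasurePreserving f μ μ) {a t : ℝ} (ha : F a = a) (ht : t ∈ Ico a (a + 1))
    (hlt : t < F t) : (t : 𝕊) ∉ μ.support := by
  obtain ⟨y, rfl⟩ := hF.surjective t
  have hay : a ≤ y := hF.strictMono.le_iff_le.mp (by rw [ha]; exact ht.1)
  have hy : y < F y := hF.strictMono.lt_iff_lt.mp hlt
  have hcover : Ioo y (F (F y)) ⊆ Ico y (F y) ∪ Ico (F y) (F (F y)) := by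
    rw [Ico_union_Ico_eq_Ico hy.le hlt.le]
    exact Ioo_subset_Ico_self
  rw [Measure.notMem_support_iff_exists]
  refine ⟨(↑) '' Ioo y (F (F y)),
    (QuotientAddGroup.isOpenMap_coe _ isOpen_Ioo).mem_nhds ⟨F y, ⟨hy, hlt⟩, rfl⟩, ?_⟩
  refine measure_mono_null ((image_mono hcover).trans (image_union ..).subset)
    (measure_union_null ?_ ?_)
  · exact hF.measure_image_coe_Ico_eq_zero hμ ha hay (hy.trans ht.2) hy
  · exact hF.measure_image_coe_Ico_eq_zero hμ ha ht.1 ht.2 hlt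

theorem apply_eq_of_mem_support [IsFiniteMeasure μ] (hF : IsOPLift f F)
    (hμ : MeasurePreserving f μ μ) {a : ℝ} (ha : F a = a) {z : 𝕊} (hz : z ∈ μ.support) :
    f z = z := by
  obtain ⟨t, ht, rfl⟩ : ∃ t ∈ Ico a (a + 1), (t : 𝕊) = z :=
    ⟨_, (AddCircle.equivIco 1 a z).2, AddCircle.coe_equivIco⟩
  rcases lt_trichotomy t (F t) with hlt | heq | hgt
  · exact absurd hz (hF.coe_notMem_support_of_lt hμ ha ht hlt)
  · rw [hF.apply_coe, ← heq]
  · obtain ⟨F', hF', hF'F⟩ := hF.exists_symm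
    have hμ' : MeasurePreserving f.symm μ μ := by
      refine ⟨hF'.continuous_perm.measurable, ?_⟩
      conv_lhs => rw [← hμ.map_eq]
      rw [Measure.map_map hF'.continuous_perm.measurable hμ.measurable]
      simp
    have ha' : F' a = a := (congrArg F' ha).symm.trans (hF'F a)
    have hlt' : t < F' t := by simpa only [hF'F t] using hF'.strictMono hgt
    exact absurd hz (hF'.coe_notMem_support_of_lt hμ' ha' ht hlt')

end IsOPLift

section MeanDisplacementHom

variable {G : Type*} [Group G] {ρ : G →* Equiv.Perm 𝕊} {μ : Measure 𝕊}
  [IsProbabilityMeasure μ]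

/-- Taken mod `ℤ`, the mean displacement no longer depends on the choice of lifts. -/
def meanDisplacementHom {L : G → ℝ → ℝ} (hL : ∀ g, IsOPLift (ρ g) (L g))
    (hμ : ∀ g, MeasurePreserving (ρ g) μ μ) : G →* Multiplicative 𝕊 :=
  MonoidHom.mk' (fun g => .ofAdd (∫ z, (hL g).displacement z ∂μ : ℝ)) fun g h => by
    have hgh : IsOPLift (ρ (g * h)) (L g ∘ L h) := by
      rw [map_mul]; exact (hL g).mul (hL h)
    obtain ⟨n, hn⟩ := hgh.exists_integral_displacement_eq_add_int (μ := μ) (hL (g * h))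
    rw [hn, ← ofAdd_add, ← QuotientAddGroup.mk_add,
      ← (hL g).integral_displacement_mul (hL h) (hμ h)]
    simp

theorem exists_lift_integral_displacement_eq_zero (hop : ∀ g, IsOPHomeo (ρ g))
    (hμ : ∀ g, MeasurePreserving (ρ g) μ μ) (hperf : commutator G = ⊤) (g : G) :
    ∃ F, ∃ hF : IsOPLift (ρ g) F, ∫ z, hF.displacement z ∂μ = 0 := by
  choose L hL using hop
  have hg : meanDisplacementHom hL hμ g = 1 :=
    Abelianization.commutator_subset_ker _ (hperf ▸ Subgroup.mem_top g)
  obtain ⟨n, hn⟩ := AddSubgroup.mem_zmultiples_iff.mp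
    ((QuotientAddGroup.eq_zero_iff _).mp (congrArg Multiplicative.toAdd hg))
  refine ⟨_, (hL g).add_int (-n), ?_⟩
  rw [(hL g).integral_displacement_add_int, ← hn]
  simp

end MeanDisplacementHom

theorem perfect_invariant_measure_global_fixed_point_general
    (G : Type*) [Group G]
    (ρ : G →* Equiv.Perm 𝕊) (hop : ∀ g : G, IsOPHomeo (ρ g))
    (μ : Measure 𝕊) [IsProbabilityMeasure μ]
    (hinv : ∀ g : G, Measure.map (ρ g) μ = μ)
    (hperf : commutator G = ⊤) :
    ∃ x : 𝕊, ∀ g : G, ρ g x = x := by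
  have hμ (g : G) : MeasurePreserving (ρ g) μ μ :=
    ⟨(hop g).choose_spec.continuous_perm.measurable, hinv g⟩
  obtain ⟨z, hz⟩ := μ.nonempty_support (NeZero.ne μ)
  refine ⟨z, fun g => ?_⟩
  obtain ⟨F, hF, hF0⟩ := exists_lift_integral_displacement_eq_zero hop hμ hperf g
  obtain ⟨a, ha⟩ := hF.exists_fixedPoint_of_integral_displacement_eq_zero hF0
  exact hF.apply_eq_of_mem_support (hμ g) ha hz

/-- Let `G` be a finitely generated group with an orientation preserving
action on the circle by homeomorphisms preserving a Borel probability measure `μ`.  If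
`H₁(G, ℤ) = 0`, i.e. `G` is perfect, then `G` acts with a global fixed point. -/
theorem perfect_invariant_measure_global_fixed_point
    (G : Type*) [Group G] [Group.FG G]
    (ρ : G →* Equiv.Perm 𝕊) (hop : ∀ g : G, IsOPHomeo (ρ g))
    (μ : Measure 𝕊) [IsProbabilityMeasure μ]
    (hinv : ∀ g : G, Measure.map (ρ g) μ = μ)
    (hperf : commutator G = ⊤) :
    ∃ x : 𝕊, ∀ g : G, ρ g x = x :=
  perfect_invariant_measure_global_fixed_point_general G ρ hop μ hinv hperf
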